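/- arXiv:2605.18450 — 2 statements merged into one kernel-verified Lean document; each statement's English description precedes it below -/
import Mathlib

section
/- Let h₁, h₂ be monotone functions on a complete lattice. If h₁ ∘ h₂* ≤ h₂* ∘ h₁* pointwise, then h₁* ∘ h₂* ≤ h₂* ∘ h₁*, where k* denotes the least closure above k. -/
/-
Since k* is the least closure above k, k* x lies below every prefixed point y ≥ x of a monotone k
(k y ≤ y): the closure whose only closed points are y and ⊤ lies above k. Take k = h₁ and
y = h₂*(h₁* x): the hypothesis and idempotence of h₁* make y a prefixed point of h₁, and y ≥ h₂* x
because h₁* is extensive.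
-/

def IsClosure {L : Type*} [CompleteLattice L] (c : L → L) : Prop :=
  Monotone c ∧ (∀ x, x ≤ c x) ∧ (∀ x, c (c x) ≤ c x)

def IsLeastClosureAbove {L : Type*} [CompleteLattice L] (k c : L → L) : Prop :=
  IsClosure c ∧ (∀ x, k x ≤ c x) ∧
    ∀ d, IsClosure d → (∀ x, k x ≤ d x) → ∀ x, c x ≤ d x

section

variable {L : Type*} [CompleteLattice L]

open Classical in
noncomputable def principalClosure (y : L) (z : L) : L :=
  if z ≤ y then y else ⊤

theorem principalClosure_of_le {y z : L} (h : z ≤ y) : principalClosure y z = y := if_pos h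

theorem principalClosure_of_not_le {y z : L} (h : ¬z ≤ y) : principalClosure y z = ⊤ := if_neg h

theorem isClosure_principalClosure (y : L) : IsClosure (principalClosure y) := by
  refine ⟨fun a b hab => ?_, fun z => ?_, fun z => ?_⟩
  · by_cases hb : b ≤ y
    · rw [principalClosure_of_le hb, principalClosure_of_le (hab.trans hb)]
    · rw [principalClosure_of_not_le hb]
      exact le_top
  · by_cases hz : z ≤ y
    · rwa [principalClosure_of_le hz]
    · rw [principalClosure_of_not_le hz]
      exact le_top
  · by_cases hz : z ≤ y
    · rw [principalClosure_of_le hz, principalClosure_of_le le_rfl]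
    · rw [principalClosure_of_not_le hz]
      exact le_top

theorem IsLeastClosureAbove.le_of_le_of_map_le {k c : L → L} (hc : IsLeastClosureAbove k c)
    (hk : Monotone k) {x y : L} (hxy : x ≤ y) (hky : k y ≤ y) : c x ≤ y := by
  have hdom : ∀ z, k z ≤ principalClosure y z := fun z => by
    by_cases hz : z ≤ y
    · rw [principalClosure_of_le hz]
      exact (hk hz).trans hky
    · rw [principalClosure_of_not_le hz]
      exact le_top
  simpa only [principalClosure_of_le hxy] using
    hc.2.2 _ (isClosure_principalClosure y) hdom x

end

theorem stmt9_general {L : Type*} [CompleteLattice L] (h₁ h₂ hs₁ hs₂ : L → L)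
    (hm₁ : Monotone h₁)
    (hls₁ : IsLeastClosureAbove h₁ hs₁) (hls₂ : IsLeastClosureAbove h₂ hs₂)
    (hyp : ∀ x, h₁ (hs₂ x) ≤ hs₂ (hs₁ x)) :
    ∀ x, hs₁ (hs₂ x) ≤ hs₂ (hs₁ x) := by
  obtain ⟨-, hs₁_ext, hs₁_idem⟩ := hls₁.1
  obtain ⟨⟨hs₂_mono, -, -⟩, -⟩ := hls₂
  intro x
  refine hls₁.le_of_le_of_map_le hm₁ (hs₂_mono (hs₁_ext x)) ?_
  calc h₁ (hs₂ (hs₁ x)) ≤ hs₂ (hs₁ (hs₁ x)) := hyp _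
    _ ≤ hs₂ (hs₁ x) := hs₂_mono (hs₁_idem x)

/-- If h₁ ∘ h₂* ≤ h₂* ∘ h₁* then h₁* ∘ h₂* ≤ h₂* ∘ h₁*. -/
theorem stmt9 {L : Type*} [CompleteLattice L] (h₁ h₂ hs₁ hs₂ : L → L)
    (hm₁ : Monotone h₁) (hm₂ : Monotone h₂)
    (hls₁ : IsLeastClosureAbove h₁ hs₁) (hls₂ : IsLeastClosureAbove h₂ hs₂)
    (hyp : ∀ x, h₁ (hs₂ x) ≤ hs₂ (hs₁ x)) :
    ∀ x, hs₁ (hs₂ x) ≤ hs₂ (hs₁ x) :=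
  stmt9_general h₁ h₂ hs₁ hs₂ hm₁ hls₁ hls₂ hyp
end

section
/- Let h₁, h₂ be monotone functions on a complete lattice, with h₁ continuous (preserving all suprema). If h₁ ∘ h₂ ≤ h₂* ∘ h₁ pointwise, then h₁* ∘ h₂* ≤ h₂* ∘ h₁* pointwise. -/
section

variable {α β : Type*} [CompleteLattice α] [CompleteLattice β]

theorem monotone_of_map_sSup {f : α → β} (hf : ∀ S : Set α, f (sSup S) = ⨆ x ∈ S, f x) :
    Monotone f := by
  intro x y hxy
  have h := hf {x, y}
  rw [sSup_pair, sup_eq_right.mpr hxy, iSup_pair] at h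
  exact h ▸ le_sup_left

theorem galoisConnection_of_map_sSup {f : α → β}
    (hf : ∀ S : Set α, f (sSup S) = ⨆ x ∈ S, f x) :
    GaloisConnection f fun y => sSup {x | f x ≤ y} := by
  intro x y
  refine ⟨fun h => le_sSup h, fun h => ?_⟩
  calc f x ≤ f (sSup {x | f x ≤ y}) := monotone_of_map_sSup hf h
    _ = ⨆ z ∈ {x | f x ≤ y}, f z := hf _
    _ ≤ y := iSup₂_le fun _ hz => hz

theorem GaloisConnection.isClosure_u_comp_comp_l {l : α → β} {u : β → α} {c : β → β}
    (gc : GaloisConnection l u) (hc : IsClosure c) : IsClosure (u ∘ c ∘ l) := by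
  obtain ⟨hc_mono, hc_le, hc_idem⟩ := hc
  refine ⟨gc.monotone_u.comp (hc_mono.comp gc.monotone_l), fun x => ?_, fun x => ?_⟩
  · exact gc.le_u (hc_le (l x))
  · exact gc.monotone_u ((hc_mono (gc.l_u_le _)).trans (hc_idem _))

end

namespace IsLeastClosureAbove

variable {L : Type*} [CompleteLattice L] {k c : L → L}

theorem l_apply_le_apply_l (hc : IsLeastClosureAbove k c) {l u : L → L}
    (gc : GaloisConnection l u) (hlk : ∀ x, l (k x) ≤ c (l x)) (x : L) :
    l (c x) ≤ c (l x) :=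
  gc.l_le (hc.2.2 _ (gc.isClosure_u_comp_comp_l hc.1) (fun z => gc.le_u (hlk z)) x)

theorem isClosure_sInf_prefixed (hk : Monotone k) :
    IsClosure fun z => sInf {y | z ≤ y ∧ k y ≤ y} := by
  have hpre : ∀ z, k (sInf {y | z ≤ y ∧ k y ≤ y}) ≤ sInf {y | z ≤ y ∧ k y ≤ y} :=
    fun z => le_sInf fun y hy => (hk (sInf_le hy)).trans hy.2
  refine ⟨fun z z' hzz' => ?_, fun z => le_sInf fun _ hy => hy.1, fun z => sInf_le ⟨le_rfl, hpre z⟩⟩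
  exact sInf_le_sInf fun y hy => ⟨hzz'.trans hy.1, hy.2⟩

theorem le_of_le_of_map_le_s10 (hc : IsLeastClosureAbove k c) (hk : Monotone k) {z y : L}
    (hzy : z ≤ y) (hy : k y ≤ y) : c z ≤ y :=
  (hc.2.2 _ (isClosure_sInf_prefixed hk)
    (fun _ => le_sInf fun _ hx => (hk hx.1).trans hx.2) z).trans (sInf_le ⟨hzy, hy⟩)

end IsLeastClosureAbove

theorem stmt10_general {L : Type*} [CompleteLattice L] (h₁ h₂ hs₁ hs₂ : L → L)
    (hcont₁ : ∀ S : Set L, h₁ (sSup S) = ⨆ x ∈ S, h₁ x)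
    (hls₁ : IsLeastClosureAbove h₁ hs₁) (hls₂ : IsLeastClosureAbove h₂ hs₂)
    (hyp : ∀ x, h₁ (h₂ x) ≤ hs₂ (h₁ x)) :
    ∀ x, hs₁ (hs₂ x) ≤ hs₂ (hs₁ x) := by
  have ⟨⟨_, hle₁, hidem₁⟩, hk₁, _⟩ := hls₁
  have hmono₂ : Monotone hs₂ := hls₂.1.1
  have gc := galoisConnection_of_map_sSup hcont₁
  intro x
  refine hls₁.le_of_le_of_map_le_s10 gc.monotone_l (hmono₂ (hle₁ x)) ?_
  calc h₁ (hs₂ (hs₁ x)) ≤ hs₂ (h₁ (hs₁ x)) := hls₂.l_apply_le_apply_l gc hyp _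
    _ ≤ hs₂ (hs₁ (hs₁ x)) := hmono₂ (hk₁ _)
    _ ≤ hs₂ (hs₁ x) := hmono₂ (hidem₁ x)

/-- If h₁ is continuous and h₁ ∘ h₂ ≤ h₂* ∘ h₁ then h₁* ∘ h₂* ≤ h₂* ∘ h₁*. -/
theorem stmt10 {L : Type*} [CompleteLattice L] (h₁ h₂ hs₁ hs₂ : L → L)
    (hcont₁ : ∀ S : Set L, h₁ (sSup S) = ⨆ x ∈ S, h₁ x)
    (hm₂ : Monotone h₂)
    (hls₁ : IsLeastClosureAbove h₁ hs₁) (hls₂ : IsLeastClosureAbove h₂ hs₂)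
    (hyp : ∀ x, h₁ (h₂ x) ≤ hs₂ (h₁ x)) :
    ∀ x, hs₁ (hs₂ x) ≤ hs₂ (hs₁ x) :=
  stmt10_general h₁ h₂ hs₁ hs₂ hcont₁ hls₁ hls₂ hyp
end
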